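/- arXiv:1709.06383 — 3 statements merged into one kernel-verified Lean document; each statement's English description precedes it below -/
import Mathlib

section
/- Let n ≥ 1 and N ≥ 1 be integers, let B and Q₁, …, Q_N be n×n real symmetric positive definite matrices, let m₀, …, m_N be positive integers, let R₀, …, R_N be symmetric positive definite matrices of sizes m_j×m_j, let H_j : ℝⁿ → ℝ^{m_j} and M_j : ℝⁿ → ℝⁿ be continuous maps, let x_b ∈ ℝⁿ and y_j ∈ ℝ^{m_j}. Define, for x = (x⁽⁰⁾, …, x⁽ᴺ⁾) ∈ (ℝⁿ)^{N+1}, J(x) = ½ (x⁽⁰⁾ − x_b)ᵀ B⁻¹ (x⁽⁰⁾ − x_b) + ½ Σ_{j=0}^{N} (H_j(x⁽ʲ⁾) − y_j)ᵀ R_j⁻¹ (H_j(x⁽ʲ⁾) − y_j) + ½ Σ_{j=1}^{N} (x⁽ʲ⁾ − M_j(x⁽ʲ⁻¹⁾))ᵀ Q_j⁻¹ (x⁽ʲ⁾ − M_j(x⁽ʲ⁻¹⁾)). Then for every c ∈ ℝ the sublevel set {x ∈ (ℝⁿ)^{N+1} : J(x) ≤ c} is compact; moreover, if J is continuously differentiable,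 its gradient is bounded on each such sublevel set. -/
open Matrix

private lemma quad_cont {k : ℕ} (A : Matrix (Fin k) (Fin k) ℝ) :
    Continuous (fun v : Fin k → ℝ => v ⬝ᵥ A.mulVec v) := by
  simp only [dotProduct, mulVec]
  exact continuous_finset_sum _ fun i _ =>
    (continuous_apply i).mul (continuous_finset_sum _ fun j _ =>
      continuous_const.mul (continuous_apply j))

private lemma quad_nonneg {k : ℕ} {A : Matrix (Fin k) (Fin k) ℝ} (hA : A.PosSemidef)
    (v : Fin k → ℝ) : 0 ≤ v ⬝ᵥ A.mulVec v := by
  simpa using hA.re_dotProduct_nonneg v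

private lemma quad_coercive {k : ℕ} {A : Matrix (Fin k) (Fin k) ℝ} (hA : A.PosDef) :
    ∃ lam > 0, ∀ v : Fin k → ℝ, lam * ‖v‖ ^ 2 ≤ v ⬝ᵥ A.mulVec v := by
  rcases Nat.eq_zero_or_pos k with hk | hk
  · subst hk
    refine ⟨1, one_pos, fun v => ?_⟩
    have hv : v = 0 := Subsingleton.elim _ _
    have h0 : ‖v‖ = 0 := by rw [hv]; exact norm_zero
    rw [h0]
    norm_num [dotProduct]
  · have hne : Nonempty (Fin k) := ⟨⟨0, hk⟩⟩
    have hs : (Metric.sphere (0 : Fin k → ℝ) 1).Nonempty := by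
      refine ⟨(fun _ => 1 : Fin k → ℝ), ?_⟩
      have h1 : ‖(fun _ => 1 : Fin k → ℝ)‖ = 1 :=
        (pi_norm_const (1 : ℝ)).trans norm_one
      simp [Metric.mem_sphere, dist_zero_right, h1]
    obtain ⟨u, hu, humin⟩ := (isCompact_sphere (0 : Fin k → ℝ) 1).exists_isMinOn hs
      (quad_cont A).continuousOn
    have hu1 : ‖u‖ = 1 := by simpa using hu
    have hune : u ≠ 0 := fun h => by simp [h] at hu1
    have hlam : 0 < u ⬝ᵥ A.mulVec u := by simpa using hA.dotProduct_mulVec_pos hune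
    refine ⟨u ⬝ᵥ A.mulVec u, hlam, fun v => ?_⟩
    rcases eq_or_ne v 0 with rfl | hv
    · simp
    · have htpos : 0 < ‖v‖ := norm_pos_iff.mpr hv
      set t : ℝ := ‖v‖
      set u' : Fin k → ℝ := t⁻¹ • v with hu'def
      have hu'norm : ‖u'‖ = 1 := by
        rw [hu'def, norm_smul, Real.norm_eq_abs, abs_inv, abs_of_pos htpos]
        exact inv_mul_cancel₀ htpos.ne'
      have hu'mem : u' ∈ Metric.sphere (0 : Fin k → ℝ) 1 := by
        simp [Metric.mem_sphere, dist_zero_right, hu'norm]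
      have hmin : u ⬝ᵥ A.mulVec u ≤ u' ⬝ᵥ A.mulVec u' := isMinOn_iff.mp humin u' hu'mem
      have hveq : v = t • u' := by
        simp [hu'def, smul_smul, mul_inv_cancel₀ htpos.ne']
      have hcalc : v ⬝ᵥ A.mulVec v = t ^ 2 * (u' ⬝ᵥ A.mulVec u') := by
        rw [hveq]
        simp [Matrix.mulVec_smul, smul_dotProduct, dotProduct_smul, smul_eq_mul]
        ring
      rw [hcalc]
      have ht2 : (0 : ℝ) ≤ t ^ 2 := sq_nonneg t
      nlinarith

/-- The weakly-constrained 4D-Var objective `J` has compact sublevel sets, and if `J`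
is continuously differentiable then its derivative is bounded on each sublevel set. -/
theorem wc4dvar_sublevel_compact_and_gradient_bounded
    (n N : ℕ) (hn : 1 ≤ n) (hN : 1 ≤ N)
    (B : Matrix (Fin n) (Fin n) ℝ) (hB : B.PosDef)
    (Q : Fin N → Matrix (Fin n) (Fin n) ℝ) (hQ : ∀ j, (Q j).PosDef)
    (m : Fin (N + 1) → ℕ) (hm : ∀ j, 0 < m j)
    (R : (j : Fin (N + 1)) → Matrix (Fin (m j)) (Fin (m j)) ℝ)
    (hR : ∀ j, (R j).PosDef)
    (H : (j : Fin (N + 1)) → (Fin n → ℝ) → (Fin (m j) → ℝ))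
    (hH : ∀ j, Continuous (H j))
    (M : Fin N → (Fin n → ℝ) → (Fin n → ℝ)) (hM : ∀ j, Continuous (M j))
    (xb : Fin n → ℝ) (y : (j : Fin (N + 1)) → Fin (m j) → ℝ)
    (J : (Fin (N + 1) → Fin n → ℝ) → ℝ)
    (hJ : ∀ x : Fin (N + 1) → Fin n → ℝ,
      J x = (1 / 2) * ((x 0 - xb) ⬝ᵥ B⁻¹.mulVec (x 0 - xb))
          + (1 / 2) * ∑ j : Fin (N + 1),
              ((H j (x j) - y j) ⬝ᵥ (R j)⁻¹.mulVec (H j (x j) - y j))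
          + (1 / 2) * ∑ j : Fin N,
              ((x j.succ - M j (x j.castSucc)) ⬝ᵥ
                (Q j)⁻¹.mulVec (x j.succ - M j (x j.castSucc)))) :
    (∀ c : ℝ, IsCompact {x : Fin (N + 1) → Fin n → ℝ | J x ≤ c}) ∧
    (ContDiff ℝ 1 J →
      ∀ c : ℝ, ∃ K : ℝ, ∀ x : Fin (N + 1) → Fin n → ℝ, J x ≤ c →
        ‖fderiv ℝ J x‖ ≤ K) := by
  -- continuity of J
  have hJfun : J = fun x : Fin (N + 1) → Fin n → ℝ =>
      (1 / 2) * ((x 0 - xb) ⬝ᵥ B⁻¹.mulVec (x 0 - xb))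
        + (1 / 2) * ∑ j : Fin (N + 1),
            ((H j (x j) - y j) ⬝ᵥ (R j)⁻¹.mulVec (H j (x j) - y j))
        + (1 / 2) * ∑ j : Fin N,
            ((x j.succ - M j (x j.castSucc)) ⬝ᵥ
              (Q j)⁻¹.mulVec (x j.succ - M j (x j.castSucc))) := funext hJ
  have hJcont : Continuous J := by
    rw [hJfun]
    refine Continuous.add (Continuous.add ?_ ?_) ?_
    · exact continuous_const.mul
        ((quad_cont B⁻¹).comp ((continuous_apply 0).sub continuous_const))
    · exact continuous_const.mul (continuous_finset_sum _ fun j _ =>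
        (quad_cont (R j)⁻¹).comp (((hH j).comp (continuous_apply j)).sub continuous_const))
    · exact continuous_const.mul (continuous_finset_sum _ fun j _ =>
        (quad_cont (Q j)⁻¹).comp ((continuous_apply j.succ).sub
          ((hM j).comp (continuous_apply j.castSucc))))
  -- nonnegativity helpers
  have hBn := fun v => quad_nonneg hB.inv.posSemidef v
  have hQn := fun (j : Fin N) v => quad_nonneg (hQ j).inv.posSemidef v
  have hRn := fun (j : Fin (N + 1)) v => quad_nonneg (hR j).inv.posSemidef v
  -- bounds on individual terms along the sublevel set
  have hterm : ∀ c, ∀ x : Fin (N + 1) → Fin n → ℝ, J x ≤ c →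
      ((x 0 - xb) ⬝ᵥ B⁻¹.mulVec (x 0 - xb) ≤ 2 * c) ∧
      (∀ j : Fin N, (x j.succ - M j (x j.castSucc)) ⬝ᵥ
          (Q j)⁻¹.mulVec (x j.succ - M j (x j.castSucc)) ≤ 2 * c) := by
    intro c x hx
    rw [hJ x] at hx
    have hobs : (0 : ℝ) ≤ ∑ j : Fin (N + 1),
        ((H j (x j) - y j) ⬝ᵥ (R j)⁻¹.mulVec (H j (x j) - y j)) :=
      Finset.sum_nonneg fun j _ => hRn j _
    have hmods : ∀ j : Fin N,
        (x j.succ - M j (x j.castSucc)) ⬝ᵥ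
            (Q j)⁻¹.mulVec (x j.succ - M j (x j.castSucc)) ≤
          ∑ i : Fin N, ((x i.succ - M i (x i.castSucc)) ⬝ᵥ
            (Q i)⁻¹.mulVec (x i.succ - M i (x i.castSucc))) := fun j =>
      Finset.single_le_sum (f := fun i : Fin N => (x i.succ - M i (x i.castSucc)) ⬝ᵥ
          (Q i)⁻¹.mulVec (x i.succ - M i (x i.castSucc)))
        (fun i _ => hQn i _) (Finset.mem_univ j)
    have hmodnn : (0 : ℝ) ≤ ∑ i : Fin N, ((x i.succ - M i (x i.castSucc)) ⬝ᵥ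
        (Q i)⁻¹.mulVec (x i.succ - M i (x i.castSucc))) :=
      Finset.sum_nonneg fun i _ => hQn i _
    have hBnn := hBn (x 0 - xb)
    constructor
    · linarith
    · intro j
      have := hmods j
      linarith
  -- compactness of sublevel sets
  have key : ∀ c : ℝ, IsCompact {x : Fin (N + 1) → Fin n → ℝ | J x ≤ c} := by
    intro c
    have hclosed : IsClosed {x : Fin (N + 1) → Fin n → ℝ | J x ≤ c} :=
      isClosed_le hJcont continuous_const
    obtain ⟨lamB, hlamB, hlamB'⟩ := quad_coercive hB.inv
    -- coordinatewise bounds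
    have hcoord : ∀ j : Fin (N + 1), ∃ t : ℝ, 0 ≤ t ∧
        ∀ x : Fin (N + 1) → Fin n → ℝ, J x ≤ c → ‖x j‖ ≤ t := by
      intro j
      induction j using Fin.induction with
      | zero =>
        refine ⟨‖xb‖ + Real.sqrt (2 * c / lamB), by positivity, fun x hx => ?_⟩
        have h1 := (hterm c x hx).1
        have h2 : lamB * ‖x 0 - xb‖ ^ 2 ≤ 2 * c := le_trans (hlamB' _) h1
        have h3 : ‖x 0 - xb‖ ^ 2 ≤ 2 * c / lamB := by
          rw [le_div_iff₀ hlamB]; linarith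
        have h4 : ‖x 0 - xb‖ ≤ Real.sqrt (2 * c / lamB) :=
          Real.le_sqrt_of_sq_le h3
        calc ‖x 0‖ = ‖xb + (x 0 - xb)‖ := by rw [add_sub_cancel]
          _ ≤ ‖xb‖ + ‖x 0 - xb‖ := norm_add_le _ _
          _ ≤ ‖xb‖ + Real.sqrt (2 * c / lamB) := by linarith
      | succ j ih =>
        obtain ⟨t, ht0, ht⟩ := ih
        obtain ⟨lamQ, hlamQ, hlamQ'⟩ := quad_coercive (hQ j).inv
        have hKc : IsCompact (M j '' Metric.closedBall 0 t) :=
          (isCompact_closedBall (0 : Fin n → ℝ) t).image (hM j)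
        obtain ⟨C, hC⟩ := hKc.isBounded.exists_norm_le
        have hC0 : 0 ≤ C := le_trans (norm_nonneg _)
          (hC (M j 0) ⟨0, Metric.mem_closedBall_self ht0, rfl⟩)
        refine ⟨C + Real.sqrt (2 * c / lamQ), by positivity, fun x hx => ?_⟩
        have h1 := (hterm c x hx).2 j
        have h2 : lamQ * ‖x j.succ - M j (x j.castSucc)‖ ^ 2 ≤ 2 * c :=
          le_trans (hlamQ' _) h1
        have h3 : ‖x j.succ - M j (x j.castSucc)‖ ≤ Real.sqrt (2 * c / lamQ) := by
          refine Real.le_sqrt_of_sq_le ?_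
          rw [le_div_iff₀ hlamQ]; linarith
        have h4 : ‖M j (x j.castSucc)‖ ≤ C := by
          refine hC _ ⟨x j.castSucc, ?_, rfl⟩
          simpa [Metric.mem_closedBall, dist_zero_right] using ht x hx
        calc ‖x j.succ‖ = ‖M j (x j.castSucc) + (x j.succ - M j (x j.castSucc))‖ := by
              rw [add_sub_cancel]
          _ ≤ ‖M j (x j.castSucc)‖ + ‖x j.succ - M j (x j.castSucc)‖ := norm_add_le _ _
          _ ≤ C + Real.sqrt (2 * c / lamQ) := by linarith
    choose t ht0 ht using hcoord
    have hT0 : 0 ≤ ∑ j, t j := Finset.sum_nonneg fun j _ => ht0 j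
    refine Metric.isCompact_of_isClosed_isBounded hclosed ?_
    rw [Metric.isBounded_iff_subset_closedBall 0]
    refine ⟨∑ j, t j, fun x hx => ?_⟩
    rw [Metric.mem_closedBall, dist_zero_right]
    rw [pi_norm_le_iff_of_nonneg hT0]
    intro i
    exact le_trans (ht i x hx) (Finset.single_le_sum (fun j _ => ht0 j) (Finset.mem_univ i))
  refine ⟨key, fun hC1 c => ?_⟩
  have hcontf : Continuous (fderiv ℝ J) := hC1.continuous_fderiv one_ne_zero
  obtain ⟨K, hK⟩ := (key c).exists_bound_of_continuousOn hcontf.continuousOn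
  exact ⟨K, fun x hx => hK x hx⟩
end

section
/- Let s ≥ 1, let A be an s×s real symmetric positive definite matrix with smallest eigenvalue ν_min > 0, let g, δ ∈ ℝ^s, let ε_q ∈ (0,1) and κ_g ≥ 1 with ‖g‖ ≤ κ_g. If the model-decrease termination test holds, i.e. −gᵀδ − ½ δᵀ A δ ≥ ε_q min{1, ‖g‖²}, then the step δ is gradient related with explicit constants: gᵀδ ≤ −(ε_q κ_g⁻²) ‖g‖² and ‖δ‖ ≤ (2/ν_min) ‖g‖, where ‖·‖ denotes the Euclidean norm. -/
open Matrix

lemma quad_lower_bound {s : ℕ} (A : Matrix (Fin s) (Fin s) ℝ) (hA : A.IsHermitian)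
    (ν : ℝ) (hmin : ∀ i, ν ≤ hA.eigenvalues i) (δ : Fin s → ℝ) :
    ν * (δ ⬝ᵥ δ) ≤ δ ⬝ᵥ A.mulVec δ := by
  have hB : (A - ν • 1).PosSemidef := by
    have hdecomp : A - ν • 1 =
        (hA.eigenvectorUnitary : Matrix (Fin s) (Fin s) ℝ) *
          diagonal (fun i => hA.eigenvalues i - ν) *
          star (hA.eigenvectorUnitary : Matrix (Fin s) (Fin s) ℝ) := by
      have hU : (hA.eigenvectorUnitary : Matrix (Fin s) (Fin s) ℝ) *
          star (hA.eigenvectorUnitary : Matrix (Fin s) (Fin s) ℝ) = 1 :=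
        (Matrix.mem_unitaryGroup_iff).mp hA.eigenvectorUnitary.2
      have hdiag : diagonal (fun i => hA.eigenvalues i - ν) =
          diagonal (RCLike.ofReal ∘ hA.eigenvalues) - ν • 1 := by
        ext i j
        by_cases h : i = j <;> simp [h, Matrix.one_apply, diagonal]
      rw [hdiag, Matrix.mul_sub, Matrix.sub_mul, ← Unitary.conjStarAlgAut_apply (S := ℝ) hA.eigenvectorUnitary (diagonal (RCLike.ofReal ∘ hA.eigenvalues)), ← hA.spectral_theorem]
      congr 1
      rw [Matrix.mul_smul, Matrix.smul_mul, mul_one, hU]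
    rw [hdecomp]
    refine (posSemidef_diagonal_iff.mpr ?_).mul_mul_conjTranspose_same _
    intro i
    simpa using hmin i
  have h := hB.re_dotProduct_nonneg δ
  simp only [RCLike.re_to_real, star_trivial, Matrix.sub_mulVec, Matrix.smul_mulVec,
    Matrix.one_mulVec, dotProduct_sub, dotProduct_smul, smul_eq_mul] at h
  linarith

/-- If the model-decrease termination test
`−gᵀδ − ½ δᵀAδ ≥ ε_q min{1, ‖g‖²}` of the globalized saddle algorithm holds, with
`A` symmetric positive definite of smallest eigenvalue `ν > 0`, `ε_q ∈ (0,1)` and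
`‖g‖ ≤ κ_g`, `κ_g ≥ 1`, then the step `δ` is gradient related:
`gᵀδ ≤ −(ε_q/κ_g²)‖g‖²` and `‖δ‖ ≤ (2/ν)‖g‖`. -/
theorem termination_test_gives_gradient_related (s : ℕ) (hs : 1 ≤ s)
    (A : Matrix (Fin s) (Fin s) ℝ) (hA : A.PosDef)
    (ν : ℝ) (hν : 0 < ν)
    (hmin : ∀ i : Fin s, ν ≤ hA.1.eigenvalues i)
    (hattained : ∃ i : Fin s, hA.1.eigenvalues i = ν)
    (g δ : EuclideanSpace ℝ (Fin s))
    (εq κg : ℝ) (hεq : εq ∈ Set.Ioo (0 : ℝ) 1) (hκg : 1 ≤ κg)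
    (hg : ‖g‖ ≤ κg)
    (htest : -(g ⬝ᵥ δ) - (1 / 2) * (δ ⬝ᵥ A.mulVec δ) ≥ εq * min 1 (‖g‖ ^ 2)) :
    g ⬝ᵥ δ ≤ -((εq * (κg⁻¹) ^ 2) * ‖g‖ ^ 2) ∧ ‖δ‖ ≤ (2 / ν) * ‖g‖ := by
  obtain ⟨hεq0, hεq1⟩ := hεq
  have hκg0 : (0 : ℝ) < κg := lt_of_lt_of_le one_pos hκg
  have hquad0 : 0 ≤ δ ⬝ᵥ A.mulVec δ := by
    have h := hA.posSemidef.re_dotProduct_nonneg (δ : Fin s → ℝ)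
    simpa using h
  have hdd : (δ : Fin s → ℝ) ⬝ᵥ δ = ‖δ‖ ^ 2 := by
    rw [EuclideanSpace.real_norm_sq_eq]; simp [dotProduct, sq]
  have hgd : (g : Fin s → ℝ) ⬝ᵥ δ = inner ℝ g δ := by
    simp [PiLp.inner_apply, dotProduct, mul_comm]
  have hmin_ge : (κg⁻¹) ^ 2 * ‖g‖ ^ 2 ≤ min 1 (‖g‖ ^ 2) := by
    refine le_min ?_ ?_
    · rw [inv_pow]
      rw [inv_mul_le_iff₀ (by positivity), mul_one]
      exact pow_le_pow_left₀ (norm_nonneg g) hg 2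
    · have h1 : (κg⁻¹) ^ 2 ≤ 1 := by
        rw [inv_pow]
        exact inv_le_one_of_one_le₀ (one_le_pow₀ hκg)
      nlinarith [sq_nonneg ‖g‖]
  constructor
  · have h1 : εq * ((κg⁻¹) ^ 2 * ‖g‖ ^ 2) ≤ εq * min 1 (‖g‖ ^ 2) :=
      mul_le_mul_of_nonneg_left hmin_ge hεq0.le
    nlinarith
  · by_cases hδ0 : ‖δ‖ = 0
    · rw [hδ0]; positivity
    · have hδpos : 0 < ‖δ‖ := lt_of_le_of_ne (norm_nonneg δ) (Ne.symm hδ0)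
      have hlow := quad_lower_bound A hA.1 ν hmin (δ : Fin s → ℝ)
      rw [hdd] at hlow
      have hCS : -(g ⬝ᵥ δ) ≤ ‖g‖ * ‖δ‖ := by
        rw [hgd]
        have := abs_real_inner_le_norm g δ
        have := neg_abs_le (inner ℝ g δ : ℝ)
        linarith
      have hminpos : 0 ≤ εq * min 1 (‖g‖ ^ 2) := by positivity
      have key : ν * ‖δ‖ ^ 2 ≤ 2 * (‖g‖ * ‖δ‖) := by nlinarith
      have : ν * ‖δ‖ ≤ 2 * ‖g‖ := by
        have := (mul_le_mul_iff_of_pos_right hδpos).mpr (le_refl (1:ℝ))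
        nlinarith
      rw [div_mul_eq_mul_div, le_div_iff₀ hν]
      linarith
end

section
/- For α > 0 let L(α) = [[1, 0], [α, 1]], L̃(α) = [[1, 0], [2+α, 1]], D(α) = diag(α, 1) be 2×2 real matrices, and let N(α) = L̃(α)⁻¹ · D(α) · L̃(α)⁻ᵀ · L(α)ᵀ · D(α)⁻¹ · L(α). Then det N(α) = 1 and trace N(α) = 4α + 2; moreover N(α) has two real positive eigenvalues μ₊(α) ≥ μ₋(α) > 0 (with μ₊μ₋ = 1 and μ₊ + μ₋ = 4α + 2), and the condition number μ₊(α)/μ₋(α) tends to infinity as α → ∞. -/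
open Matrix Filter

/-- `L(α) = [[1,0],[α,1]]`. -/
noncomputable def Lmat (α : ℝ) : Matrix (Fin 2) (Fin 2) ℝ := !![1, 0; α, 1]

/-- `L̃(α) = [[1,0],[2+α,1]]`. -/
noncomputable def Ltil (α : ℝ) : Matrix (Fin 2) (Fin 2) ℝ := !![1, 0; 2 + α, 1]

/-- `D(α) = diag(α, 1)`. -/
noncomputable def Dmat (α : ℝ) : Matrix (Fin 2) (Fin 2) ℝ := !![α, 0; 0, 1]

/-- `N(α) = L̃(α)⁻¹ D(α) L̃(α)⁻ᵀ L(α)ᵀ D(α)⁻¹ L(α)`. -/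
noncomputable def Nmat (α : ℝ) : Matrix (Fin 2) (Fin 2) ℝ :=
  (Ltil α)⁻¹ * Dmat α * ((Ltil α)ᵀ)⁻¹ * (Lmat α)ᵀ * (Dmat α)⁻¹ * Lmat α

lemma LmatT (α : ℝ) : (Lmat α)ᵀ = !![1, α; 0, 1] := by
  ext i j; fin_cases i <;> fin_cases j <;> rfl

lemma LtilT (α : ℝ) : (Ltil α)ᵀ = !![1, 2 + α; 0, 1] := by
  ext i j; fin_cases i <;> fin_cases j <;> rfl

lemma Ltil_inv (α : ℝ) : (Ltil α)⁻¹ = !![1, 0; -(2 + α), 1] := by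
  apply Matrix.inv_eq_right_inv
  rw [Ltil, Matrix.mul_fin_two, Matrix.one_fin_two]
  ext i j; fin_cases i <;> fin_cases j <;> simp <;> ring

lemma LtilT_inv (α : ℝ) : ((Ltil α)ᵀ)⁻¹ = !![1, -(2 + α); 0, 1] := by
  apply Matrix.inv_eq_right_inv
  rw [LtilT, Matrix.mul_fin_two, Matrix.one_fin_two]
  ext i j; fin_cases i <;> fin_cases j <;> simp <;> ring

lemma Dmat_inv (α : ℝ) (hα : α ≠ 0) : (Dmat α)⁻¹ = !![α⁻¹, 0; 0, 1] := by
  apply Matrix.inv_eq_right_inv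
  rw [Dmat, Matrix.mul_fin_two, Matrix.one_fin_two]
  norm_num [mul_inv_cancel₀ hα]

lemma Nmat_eq (α : ℝ) (hα : α ≠ 0) :
    Nmat α = !![1 - 2*α^2, -2*α; -2 + 4*α^2 + 2*α^3, 4*α + 2*α^2 + 1] := by
  rw [Nmat, Ltil_inv, LtilT_inv, Dmat_inv α hα, LmatT, Lmat, Dmat,
    Matrix.mul_fin_two, Matrix.mul_fin_two, Matrix.mul_fin_two,
    Matrix.mul_fin_two, Matrix.mul_fin_two]
  ext i j
  fin_cases i <;> fin_cases j <;>
    simp only [Matrix.cons_val', Matrix.cons_val_zero, Matrix.cons_val_one, Matrix.head_cons,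
      Matrix.head_fin_const, Matrix.empty_val', Matrix.cons_val_fin_one, Matrix.of_apply, Fin.zero_eta, Fin.mk_one] <;>
    field_simp <;> ring

noncomputable def mup (α : ℝ) : ℝ := (2*α + 1) + Real.sqrt ((2*α+1)^2 - 1)
noncomputable def mum (α : ℝ) : ℝ := (2*α + 1) - Real.sqrt ((2*α+1)^2 - 1)

lemma sq_sqrt' (α : ℝ) (hα : 0 < α) :
    Real.sqrt ((2*α+1)^2 - 1) ^ 2 = (2*α+1)^2 - 1 := by
  rw [Real.sq_sqrt]; nlinarith

lemma mum_pos (α : ℝ) (hα : 0 < α) : 0 < mum α := by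
  have h := sq_sqrt' α hα
  have hs : Real.sqrt ((2*α+1)^2 - 1) < 2*α+1 := by
    nlinarith [Real.sqrt_nonneg ((2*α+1)^2 - 1)]
  simp only [mum]; linarith

lemma mul_mu (α : ℝ) (hα : 0 < α) : mup α * mum α = 1 := by
  have h := sq_sqrt' α hα
  simp only [mup, mum]; nlinarith

lemma spectrum_N (α : ℝ) (hα : 0 < α) :
    spectrum ℝ (Nmat α) = {mup α, mum α} := by
  have hsum : mup α + mum α = 4*α + 2 := by simp only [mup, mum]; ring
  have hmul := mul_mu α hα
  ext x
  rw [spectrum.mem_iff, Matrix.isUnit_iff_isUnit_det, isUnit_iff_ne_zero, not_not]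
  have hm : (algebraMap ℝ (Matrix (Fin 2) (Fin 2) ℝ) x - Nmat α) =
      !![x - (1 - 2*α^2), 2*α; 2 - 4*α^2 - 2*α^3, x - (4*α + 2*α^2 + 1)] := by
    rw [Nmat_eq α hα.ne', Algebra.algebraMap_eq_smul_one,
      Matrix.one_fin_two]
    ext i j
    fin_cases i <;> fin_cases j <;>
      simp [Matrix.smul_apply] <;> ring
  rw [hm, Matrix.det_fin_two_of]
  have key : (x - (1 - 2*α^2)) * (x - (4*α + 2*α^2 + 1)) - 2*α * (2 - 4*α^2 - 2*α^3)
      = (x - mup α) * (x - mum α) := by linear_combination x * hsum - hmul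
  rw [key, mul_eq_zero, sub_eq_zero, sub_eq_zero]
  simp [Set.mem_insert_iff, Set.mem_singleton_iff]

/-- For every `α > 0`, `N(α) = L̃⁻¹DL̃⁻ᵀLᵀD⁻¹L` has determinant `1` and trace
`4α + 2`, and two real positive eigenvalues `μ₊ ≥ μ₋ > 0` with `μ₊μ₋ = 1`,
`μ₊ + μ₋ = 4α + 2`; the condition number `μ₊/μ₋` tends to infinity as `α → ∞`. -/
theorem preconditioned_weighted_LTL_conditioning_blows_up :
    ∃ μp μm : ℝ → ℝ,
      (∀ α : ℝ, 0 < α →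
        (Nmat α).det = 1 ∧
        (Nmat α).trace = 4 * α + 2 ∧
        0 < μm α ∧ μm α ≤ μp α ∧
        spectrum ℝ (Nmat α) = {μp α, μm α} ∧
        μp α * μm α = 1 ∧
        μp α + μm α = 4 * α + 2) ∧
      Tendsto (fun α => μp α / μm α) atTop atTop := by
  refine ⟨mup, mum, fun α hα => ?_, ?_⟩
  · have h := sq_sqrt' α hα
    have hs := Real.sqrt_nonneg ((2*α+1)^2 - 1)
    refine ⟨?_, ?_, mum_pos α hα, by simp only [mup, mum]; linarith,
      spectrum_N α hα, mul_mu α hα, by simp only [mup, mum]; ring⟩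
    · rw [Nmat_eq α hα.ne', Matrix.det_fin_two_of]; field_simp; ring
    · rw [Nmat_eq α hα.ne', Matrix.trace_fin_two_of]; ring
  · have hlin : Tendsto (fun α : ℝ => 2*α + 1) atTop atTop := by
      apply tendsto_atTop_add_const_right
      exact (tendsto_id (α := ℝ)).const_mul_atTop two_pos
    refine tendsto_atTop_mono' atTop ?_ hlin
    filter_upwards [eventually_gt_atTop 0] with α hα
    have hm := mum_pos α hα
    have hmul := mul_mu α hα
    have hsq := sq_sqrt' α hα
    have hs := Real.sqrt_nonneg ((2*α+1)^2 - 1)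
    have h1 : mum α ≤ 1 := by simp only [mum]; nlinarith
    have h2 : 2*α + 1 ≤ mup α := by simp only [mup]; nlinarith
    rw [le_div_iff₀ hm]
    nlinarith
end
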